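/- arXiv:2103.15342 — 3 statements merged into one kernel-verified Lean document; each statement's English description precedes it below -/
import Mathlib

section
/- In the linear model f(Y) = X_S^T β_S + ε_S with ε_S centered, variance σ_S², and independent of X_S, condition on a full-rank design matrix Z_S ∈ ℝ^{m×(s+1)} from exploration, so that the least-squares estimator satisfies β̂_S = β_S + (Z_S^T Z_S)^{-1} Z_S^T η_S, where η_S ∈ ℝ^m has centered components with E[η_S η_S^T] = σ_S² I_m. Then averaging the conditional mean-squared error MSE_S|β̂_S = (x_S^T(β̂_S − β_S))² + (1/N_S) β̂_S^T Σ_S β̂_S over the noise η_S yields E_{η_S}[MSE_S|β̂_S] = (1/N_S)[β_S^T Σ_S β_S + σ_S² tr(Σ_S (Z_S^T Z_S)^{-1})] + σ_S² tr(x_S x_S^T (Z_S^T Z_S)^{-1}). -/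
/-!
With `A = (ZᵀZ)⁻¹Zᵀ` we have `β̂ - β = Aη`, so both terms of the conditional MSE are quadratic
forms `(v + Aη)ᵀ Q (v + Aη)`, with `(v, Q) = (0, x xᵀ)` and `(β, Σ)`. Expanding, the linear part
in `η` averages to zero and `E[ηᵀCη] = σ² tr C`, so the average is `vᵀQv + σ² tr(AᵀQA)`;
finally `tr(AᵀQA) = tr(Q AAᵀ)` and `AAᵀ = (ZᵀZ)⁻¹`.
-/

open MeasureTheory ProbabilityTheory Matrix

section NoiseMoments

variable {Ω ι : Type*} [MeasurableSpace Ω] {μ : Measure Ω} [Fintype ι] {η : Ω → ι → ℝ}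

lemma integrable_dotProduct [IsFiniteMeasure μ] (hη : ∀ i, MemLp (fun ω => η ω i) 2 μ)
    (d : ι → ℝ) : Integrable (fun ω => d ⬝ᵥ η ω) μ :=
  integrable_finsetSum _ fun i _ => ((hη i).integrable one_le_two).const_mul (d i)

lemma integral_dotProduct_eq_zero [IsFiniteMeasure μ] (hη : ∀ i, MemLp (fun ω => η ω i) 2 μ)
    (hcent : ∀ i, ∫ ω, η ω i ∂μ = 0) (d : ι → ℝ) : ∫ ω, d ⬝ᵥ η ω ∂μ = 0 := by
  simp only [dotProduct]
  rw [integral_finsetSum _ fun i _ => ((hη i).integrable one_le_two).const_mul (d i)]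
  simp [integral_const_mul, hcent]

lemma dotProduct_mulVec_eq_sum (C : Matrix ι ι ℝ) (y : ι → ℝ) :
    y ⬝ᵥ (C *ᵥ y) = ∑ p : ι × ι, C p.1 p.2 * (y p.1 * y p.2) := by
  simp only [Fintype.sum_prod_type, dotProduct, mulVec, Finset.mul_sum]
  exact Finset.sum_congr rfl fun i _ => Finset.sum_congr rfl fun j _ => by ring

lemma integrable_dotProduct_mulVec (hη : ∀ i, MemLp (fun ω => η ω i) 2 μ) (C : Matrix ι ι ℝ) :
    Integrable (fun ω => η ω ⬝ᵥ (C *ᵥ η ω)) μ := by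
  simp only [dotProduct_mulVec_eq_sum]
  exact integrable_finsetSum _ fun p _ => ((hη p.1).integrable_mul (hη p.2)).const_mul _

lemma integral_dotProduct_mulVec [DecidableEq ι] {σ2 : ℝ}
    (hη : ∀ i, MemLp (fun ω => η ω i) 2 μ)
    (hcov : ∀ i j, ∫ ω, η ω i * η ω j ∂μ = σ2 * (if i = j then (1 : ℝ) else 0))
    (C : Matrix ι ι ℝ) : ∫ ω, η ω ⬝ᵥ (C *ᵥ η ω) ∂μ = σ2 * trace C := by
  simp only [dotProduct_mulVec_eq_sum]
  rw [integral_finsetSum _ fun p _ => ((hη p.1).integrable_mul (hη p.2)).const_mul _]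
  simp [integral_const_mul, hcov, Fintype.sum_prod_type, trace, Finset.mul_sum, mul_comm]

end NoiseMoments

section AffineQuadForm

variable {n ι : Type*} [Fintype n] [Fintype ι]

lemma sq_dotProduct_eq_dotProduct_vecMulVec_mulVec (x y : n → ℝ) :
    (x ⬝ᵥ y) ^ 2 = y ⬝ᵥ (vecMulVec x x *ᵥ y) := by
  rw [vecMulVec_mulVec, op_smul_eq_smul, dotProduct_smul, smul_eq_mul, dotProduct_comm y, sq]

lemma affine_dotProduct_mulVec_eq (Q : Matrix n n ℝ) (A : Matrix n ι ℝ) (v : n → ℝ) (y : ι → ℝ) :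
    (v + A *ᵥ y) ⬝ᵥ (Q *ᵥ (v + A *ᵥ y))
      = v ⬝ᵥ (Q *ᵥ v) + (v ᵥ* (Q * A) + (Q *ᵥ v) ᵥ* A) ⬝ᵥ y + y ⬝ᵥ ((Aᵀ * Q * A) *ᵥ y) := by
  have hcross : (A *ᵥ y) ⬝ᵥ (Q *ᵥ v) = ((Q *ᵥ v) ᵥ* A) ⬝ᵥ y := by
    rw [dotProduct_comm, dotProduct_mulVec]
  have hquad : (A *ᵥ y) ⬝ᵥ ((Q * A) *ᵥ y) = y ⬝ᵥ ((Aᵀ * Q * A) *ᵥ y) := by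
    rw [Matrix.mul_assoc, ← mulVec_mulVec y Aᵀ, dotProduct_transpose_mulVec, dotProduct_comm]
  rw [mulVec_add, dotProduct_add, add_dotProduct, add_dotProduct, mulVec_mulVec,
    dotProduct_mulVec v (Q * A), hcross, hquad, add_dotProduct]
  ring

end AffineQuadForm

section AffineNoise

variable {Ω n ι : Type*} [MeasurableSpace Ω] {μ : Measure Ω} [Fintype n] [Fintype ι]
  {η : Ω → ι → ℝ}

lemma integrable_affine_dotProduct_mulVec [IsFiniteMeasure μ]
    (hη : ∀ i, MemLp (fun ω => η ω i) 2 μ) (Q : Matrix n n ℝ) (A : Matrix n ι ℝ) (v : n → ℝ) :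
    Integrable (fun ω => (v + A *ᵥ η ω) ⬝ᵥ (Q *ᵥ (v + A *ᵥ η ω))) μ := by
  simp only [affine_dotProduct_mulVec_eq]
  exact ((integrable_const _).add (integrable_dotProduct hη _)).add
    (integrable_dotProduct_mulVec hη _)

lemma integral_affine_dotProduct_mulVec [IsProbabilityMeasure μ] [DecidableEq ι] {σ2 : ℝ}
    (hη : ∀ i, MemLp (fun ω => η ω i) 2 μ) (hcent : ∀ i, ∫ ω, η ω i ∂μ = 0)
    (hcov : ∀ i j, ∫ ω, η ω i * η ω j ∂μ = σ2 * (if i = j then (1 : ℝ) else 0))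
    (Q : Matrix n n ℝ) (A : Matrix n ι ℝ) (v : n → ℝ) :
    ∫ ω, (v + A *ᵥ η ω) ⬝ᵥ (Q *ᵥ (v + A *ᵥ η ω)) ∂μ
      = v ⬝ᵥ (Q *ᵥ v) + σ2 * trace (Q * (A * Aᵀ)) := by
  simp only [affine_dotProduct_mulVec_eq]
  rw [integral_add ?_ (integrable_dotProduct_mulVec hη _),
    integral_add (integrable_const _) (integrable_dotProduct hη _), integral_const,
    integral_dotProduct_eq_zero hη hcent, integral_dotProduct_mulVec hη hcov, Matrix.mul_assoc,
    trace_mul_comm, Matrix.mul_assoc]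
  · simp only [probReal_univ, smul_eq_mul, one_mul, add_zero]
  · exact (integrable_const _).add (integrable_dotProduct hη _)

end AffineNoise

lemma leastSquares_mul_transpose_eq {R m n : Type*} [CommRing R] [Fintype m] [Fintype n]
    [DecidableEq n] {Z : Matrix m n R} (hZ : IsUnit (Zᵀ * Z)) :
    ((Zᵀ * Z)⁻¹ * Zᵀ) * ((Zᵀ * Z)⁻¹ * Zᵀ)ᵀ = (Zᵀ * Z)⁻¹ := by
  rw [transpose_mul, transpose_nonsing_inv, transpose_mul, transpose_transpose, Matrix.mul_assoc,
    ← Matrix.mul_assoc Zᵀ, mul_nonsing_inv _ ((isUnit_iff_isUnit_det _).mp hZ), Matrix.mul_one]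

theorem lrmc_average_conditional_mse_general
    {Ω : Type*} [MeasureSpace Ω] [IsProbabilityMeasure (ℙ : Measure Ω)]
    (s m N : ℕ)
    (x β : Fin (s + 1) → ℝ) (Sg : Matrix (Fin (s + 1)) (Fin (s + 1)) ℝ) (σ2 : ℝ)
    (Z : Matrix (Fin m) (Fin (s + 1)) ℝ) (hZ : IsUnit (Zᵀ * Z))
    (η : Ω → Fin m → ℝ)
    (hηL2 : ∀ i, MemLp (fun ω => η ω i) 2 (ℙ : Measure Ω))
    (hηcent : ∀ i, ∫ ω, η ω i ∂(ℙ : Measure Ω) = 0)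
    (hηcov : ∀ i j, ∫ ω, η ω i * η ω j ∂(ℙ : Measure Ω)
        = σ2 * (if i = j then (1 : ℝ) else 0))
    (βhat : Ω → Fin (s + 1) → ℝ)
    (hβhat : ∀ ω, βhat ω = β + (Zᵀ * Z)⁻¹ *ᵥ (Zᵀ *ᵥ η ω)) :
    ∫ ω, ((x ⬝ᵥ (βhat ω - β)) ^ 2 + (N : ℝ)⁻¹ * (βhat ω ⬝ᵥ Sg.mulVec (βhat ω)))
        ∂(ℙ : Measure Ω)
      = (N : ℝ)⁻¹ * (β ⬝ᵥ Sg.mulVec β + σ2 * Matrix.trace (Sg * (Zᵀ * Z)⁻¹))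
        + σ2 * Matrix.trace (Matrix.vecMulVec x x * (Zᵀ * Z)⁻¹) := by
  set A := (Zᵀ * Z)⁻¹ * Zᵀ
  have hβhat_eq : ∀ ω, βhat ω = β + A *ᵥ η ω := fun ω => by rw [hβhat, mulVec_mulVec]
  have herr : ∀ ω, (x ⬝ᵥ (βhat ω - β)) ^ 2
      = (0 + A *ᵥ η ω) ⬝ᵥ (vecMulVec x x *ᵥ (0 + A *ᵥ η ω)) := fun ω => by
    rw [hβhat_eq, add_sub_cancel_left, zero_add, sq_dotProduct_eq_dotProduct_vecMulVec_mulVec]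
  simp_rw [herr, hβhat_eq]
  rw [integral_add (integrable_affine_dotProduct_mulVec hηL2 _ _ _)
      ((integrable_affine_dotProduct_mulVec hηL2 _ _ _).const_mul _), integral_const_mul,
    integral_affine_dotProduct_mulVec hηL2 hηcent hηcov,
    integral_affine_dotProduct_mulVec hηL2 hηcent hηcov, leastSquares_mul_transpose_eq hZ]
  simp only [zero_dotProduct, zero_add]
  ring

/-- Averaging the conditional MSE of the LRMC estimator over the exploration noise:
conditioned on a full-rank design matrix `Z`, the least-squares estimator is
`β̂ = β + (ZᵀZ)⁻¹ Zᵀ η` with `η` centered and `E[ηηᵀ] = σ² I_m`, and averaging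
`MSE_S|β̂ = (xᵀ(β̂−β))² + (1/N) β̂ᵀΣβ̂` over `η` gives
`(1/N)[βᵀΣβ + σ² tr(Σ(ZᵀZ)⁻¹)] + σ² tr(x xᵀ (ZᵀZ)⁻¹)`. -/
theorem lrmc_average_conditional_mse
    {Ω : Type*} [MeasureSpace Ω] [IsProbabilityMeasure (ℙ : Measure Ω)]
    (s m N : ℕ) (hN : 0 < N)
    (x β : Fin (s + 1) → ℝ) (Sg : Matrix (Fin (s + 1)) (Fin (s + 1)) ℝ) (σ2 : ℝ)
    (Z : Matrix (Fin m) (Fin (s + 1)) ℝ) (hZ : IsUnit (Zᵀ * Z))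
    (η : Ω → Fin m → ℝ) (hηmeas : Measurable η)
    (hηL2 : ∀ i, MemLp (fun ω => η ω i) 2 (ℙ : Measure Ω))
    (hηcent : ∀ i, ∫ ω, η ω i ∂(ℙ : Measure Ω) = 0)
    (hηcov : ∀ i j, ∫ ω, η ω i * η ω j ∂(ℙ : Measure Ω)
        = σ2 * (if i = j then (1 : ℝ) else 0))
    (βhat : Ω → Fin (s + 1) → ℝ)
    (hβhat : ∀ ω, βhat ω = β + (Zᵀ * Z)⁻¹ *ᵥ (Zᵀ *ᵥ η ω)) :
    ∫ ω, ((x ⬝ᵥ (βhat ω - β)) ^ 2 + (N : ℝ)⁻¹ * (βhat ω ⬝ᵥ Sg.mulVec (βhat ω)))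
        ∂(ℙ : Measure Ω)
      = (N : ℝ)⁻¹ * (β ⬝ᵥ Sg.mulVec β + σ2 * Matrix.trace (Sg * (Zᵀ * Z)⁻¹))
        + σ2 * Matrix.trace (Matrix.vecMulVec x x * (Zᵀ * Z)⁻¹) :=
  lrmc_average_conditional_mse_general s m N x β Sg σ2 Z hZ η hηL2 hηcent hηcov βhat hβhat
end

section
/- Let Σ̂, Σ ∈ ℝ^{s×s} be symmetric matrices, β, β̂ ∈ ℝ^{k₀×s} and Q ∈ ℝ^{q×k₀}. Then |tr(Σ̂ β̂^T Q^T Q β̂) − tr(Σ β^T Q^T Q β)| ≤ 2 s ‖Σ̂‖₂ (‖Qβ‖₂ + ‖Qβ̂‖₂) ‖Qβ − Qβ̂‖_F + √s ‖Σ̂ − Σ‖₂ tr(β^T Q^T Q β), where ‖·‖₂ is the spectral norm and ‖·‖_F the Frobenius norm. -/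
open Matrix

/-- Frobenius norm of a real matrix. -/
noncomputable def frobNorm {p r : ℕ} (M : Matrix (Fin p) (Fin r) ℝ) : ℝ :=
  Real.sqrt (∑ i, ∑ j, (M i j) ^ 2)

/-- Spectral (ℓ²-operator) norm of a real matrix. -/
noncomputable def specNorm {p r : ℕ} (M : Matrix (Fin p) (Fin r) ℝ) : ℝ :=
  ‖LinearMap.toContinuousLinearMap (Matrix.toEuclideanLin M)‖

/-!
With `A = Qβ` and `B = Qβ̂` the difference of traces is
`tr(Σ̂ (BᵀB - AᵀA)) + tr((Σ̂ - Σ) AᵀA)`. Both terms are bounded by Cauchy–Schwarz for the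
trace form, `‖M‖_F ≤ √s ‖M‖₂` for the `s × s` factor, and for the other factor either
`BᵀB - AᵀA = Bᵀ(B - A) + (Aᵀ(B - A))ᵀ` with `‖MN‖_F ≤ ‖M‖₂ ‖N‖_F`, or
`‖AᵀA‖_F ≤ ‖A‖_F² = tr(AᵀA)`. Finally `√s ≤ 2s`.
-/

variable {p r t : ℕ}

section Frobenius

open scoped Matrix.Norms.Frobenius

theorem frobNorm_eq_norm (M : Matrix (Fin p) (Fin r) ℝ) : frobNorm M = ‖M‖ := by
  simp [frobNorm, frobenius_norm_def, Real.sqrt_eq_rpow]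

theorem frobNorm_nonneg (M : Matrix (Fin p) (Fin r) ℝ) : 0 ≤ frobNorm M :=
  Real.sqrt_nonneg _

theorem frobNorm_transpose (M : Matrix (Fin p) (Fin r) ℝ) : frobNorm Mᵀ = frobNorm M := by
  simp only [frobNorm_eq_norm, frobenius_norm_transpose]

theorem frobNorm_add_le (M N : Matrix (Fin p) (Fin r) ℝ) :
    frobNorm (M + N) ≤ frobNorm M + frobNorm N := by
  simp only [frobNorm_eq_norm]
  exact norm_add_le M N

theorem frobNorm_sub_rev (M N : Matrix (Fin p) (Fin r) ℝ) :
    frobNorm (M - N) = frobNorm (N - M) := by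
  simp only [frobNorm_eq_norm]
  exact norm_sub_rev M N

theorem frobNorm_mul_le (M : Matrix (Fin p) (Fin r) ℝ) (N : Matrix (Fin r) (Fin t) ℝ) :
    frobNorm (M * N) ≤ frobNorm M * frobNorm N := by
  simp only [frobNorm_eq_norm]
  exact frobenius_norm_mul M N

theorem frobNorm_one : frobNorm (1 : Matrix (Fin p) (Fin p) ℝ) = Real.sqrt p := by
  rw [frobNorm_eq_norm, ← coe_nnnorm, frobenius_nnnorm_one]
  simp

end Frobenius

theorem specNorm_nonneg (M : Matrix (Fin p) (Fin r) ℝ) : 0 ≤ specNorm M :=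
  norm_nonneg _

open scoped Matrix.Norms.L2Operator in
theorem specNorm_transpose (M : Matrix (Fin p) (Fin r) ℝ) : specNorm Mᵀ = specNorm M := by
  rw [← conjTranspose_eq_transpose_of_trivial]
  exact l2_opNorm_conjTranspose M

open scoped Matrix.Norms.L2Operator in
theorem norm_mulVec_le_specNorm_mul (M : Matrix (Fin p) (Fin r) ℝ) (v : Fin r → ℝ) :
    ‖WithLp.toLp 2 (M *ᵥ v)‖ ≤ specNorm M * ‖WithLp.toLp 2 v‖ :=
  l2_opNorm_mulVec M (WithLp.toLp 2 v)

theorem frobNorm_sq_eq_sum_norm_col (M : Matrix (Fin p) (Fin r) ℝ) :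
    frobNorm M ^ 2 = ∑ j, ‖WithLp.toLp 2 (Mᵀ j)‖ ^ 2 := by
  rw [frobNorm, Real.sq_sqrt (by positivity), Finset.sum_comm]
  simp [EuclideanSpace.norm_sq_eq]

theorem frobNorm_mul_le_specNorm_mul (M : Matrix (Fin p) (Fin r) ℝ)
    (N : Matrix (Fin r) (Fin t) ℝ) :
    frobNorm (M * N) ≤ specNorm M * frobNorm N := by
  rw [← pow_le_pow_iff_left₀ (frobNorm_nonneg _)
    (mul_nonneg (specNorm_nonneg M) (frobNorm_nonneg N)) two_ne_zero, mul_pow,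
    frobNorm_sq_eq_sum_norm_col, frobNorm_sq_eq_sum_norm_col, Finset.mul_sum]
  gcongr with j
  rw [← mul_pow, transpose_mul, mul_apply_eq_vecMul, vecMul_transpose]
  exact pow_le_pow_left₀ (norm_nonneg _) (norm_mulVec_le_specNorm_mul M _) 2

theorem frobNorm_le_sqrt_mul_specNorm (M : Matrix (Fin p) (Fin p) ℝ) :
    frobNorm M ≤ Real.sqrt p * specNorm M := by
  calc frobNorm M = frobNorm (M * 1) := by rw [Matrix.mul_one]
    _ ≤ specNorm M * frobNorm 1 := frobNorm_mul_le_specNorm_mul M 1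
    _ = Real.sqrt p * specNorm M := by rw [frobNorm_one, mul_comm]

noncomputable def vecL2 (M : Matrix (Fin p) (Fin r) ℝ) : EuclideanSpace ℝ (Fin p × Fin r) :=
  WithLp.toLp 2 fun x => M x.1 x.2

theorem norm_vecL2 (M : Matrix (Fin p) (Fin r) ℝ) : ‖vecL2 M‖ = frobNorm M := by
  simp [vecL2, EuclideanSpace.norm_eq, frobNorm, Fintype.sum_prod_type]

theorem inner_vecL2 (M N : Matrix (Fin p) (Fin r) ℝ) :
    inner ℝ (vecL2 M) (vecL2 N) = trace (Mᵀ * N) := by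
  simp only [vecL2, PiLp.inner_apply, RCLike.inner_apply, Real.ringHom_apply, mul_comm,
    Fintype.sum_prod_type, trace, diag_apply, mul_apply, transpose_apply]
  exact Finset.sum_comm

theorem abs_trace_mul_le (M : Matrix (Fin p) (Fin r) ℝ) (N : Matrix (Fin r) (Fin p) ℝ) :
    |trace (M * N)| ≤ frobNorm M * frobNorm N := by
  have h := abs_real_inner_le_norm (vecL2 Mᵀ) (vecL2 N)
  rwa [inner_vecL2, transpose_transpose, norm_vecL2, norm_vecL2, frobNorm_transpose] at h

theorem trace_transpose_mul_self (A : Matrix (Fin p) (Fin r) ℝ) :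
    trace (Aᵀ * A) = frobNorm A ^ 2 := by
  rw [← inner_vecL2, real_inner_self_eq_norm_sq, norm_vecL2]

theorem frobNorm_transpose_mul_self_le_trace (A : Matrix (Fin p) (Fin r) ℝ) :
    frobNorm (Aᵀ * A) ≤ trace (Aᵀ * A) := by
  simpa [trace_transpose_mul_self, frobNorm_transpose, sq] using
    frobNorm_mul_le Aᵀ A

theorem frobNorm_transpose_mul_self_sub_le (A B : Matrix (Fin p) (Fin r) ℝ) :
    frobNorm (Bᵀ * B - Aᵀ * A) ≤ (specNorm A + specNorm B) * frobNorm (A - B) := by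
  have hsplit : Bᵀ * B - Aᵀ * A = Bᵀ * (B - A) + (Aᵀ * (B - A))ᵀ := by
    simp only [Matrix.mul_sub, transpose_mul, transpose_sub, transpose_transpose]
    abel
  calc frobNorm (Bᵀ * B - Aᵀ * A)
      ≤ frobNorm (Bᵀ * (B - A)) + frobNorm (Aᵀ * (B - A)) := by
        rw [hsplit, ← frobNorm_transpose (Aᵀ * (B - A))]
        exact frobNorm_add_le _ _
    _ ≤ specNorm B * frobNorm (B - A) + specNorm A * frobNorm (B - A) := by
        rw [← specNorm_transpose A, ← specNorm_transpose B]
        exact add_le_add (frobNorm_mul_le_specNorm_mul _ _) (frobNorm_mul_le_specNorm_mul _ _)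
    _ = (specNorm A + specNorm B) * frobNorm (A - B) := by
        rw [frobNorm_sub_rev]
        ring

theorem sqrt_natCast_le_self (n : ℕ) : Real.sqrt n ≤ n :=
  Real.sqrt_le_left (Nat.cast_nonneg n) |>.mpr (by exact_mod_cast Nat.le_self_pow two_ne_zero n)

theorem abs_trace_mul_sub_le (S : Matrix (Fin p) (Fin p) ℝ) (A B : Matrix (Fin r) (Fin p) ℝ) :
    |trace (S * (Bᵀ * B - Aᵀ * A))|
      ≤ Real.sqrt p * specNorm S * ((specNorm A + specNorm B) * frobNorm (A - B)) :=
  (abs_trace_mul_le _ _).trans <| mul_le_mul (frobNorm_le_sqrt_mul_specNorm S)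
    (frobNorm_transpose_mul_self_sub_le A B) (frobNorm_nonneg _)
    (mul_nonneg (Real.sqrt_nonneg _) (specNorm_nonneg _))

theorem abs_trace_mul_transpose_mul_self_le (S : Matrix (Fin p) (Fin p) ℝ)
    (A : Matrix (Fin r) (Fin p) ℝ) :
    |trace (S * (Aᵀ * A))| ≤ Real.sqrt p * specNorm S * trace (Aᵀ * A) :=
  (abs_trace_mul_le _ _).trans <| mul_le_mul (frobNorm_le_sqrt_mul_specNorm S)
    (frobNorm_transpose_mul_self_le_trace A) (frobNorm_nonneg _)
    (mul_nonneg (Real.sqrt_nonneg _) (specNorm_nonneg _))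

theorem plugin_trace_estimator_bound_general
    (s k₀ q : ℕ)
    (Shat Sg : Matrix (Fin s) (Fin s) ℝ)
    (β βhat : Matrix (Fin k₀) (Fin s) ℝ) (Q : Matrix (Fin q) (Fin k₀) ℝ) :
    |Matrix.trace (Shat * (βhatᵀ * Qᵀ * Q * βhat)) - Matrix.trace (Sg * (βᵀ * Qᵀ * Q * β))|
      ≤ 2 * s * specNorm Shat * (specNorm (Q * β) + specNorm (Q * βhat))
            * frobNorm (Q * β - Q * βhat)
        + Real.sqrt s * specNorm (Shat - Sg) * Matrix.trace (βᵀ * Qᵀ * Q * β) := by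
  set A := Q * β
  set B := Q * βhat
  have hgram (P : Matrix (Fin k₀) (Fin s) ℝ) : Pᵀ * Qᵀ * Q * P = (Q * P)ᵀ * (Q * P) := by
    simp only [transpose_mul, Matrix.mul_assoc]
  have hsplit : trace (Shat * (Bᵀ * B)) - trace (Sg * (Aᵀ * A))
      = trace (Shat * (Bᵀ * B - Aᵀ * A)) + trace ((Shat - Sg) * (Aᵀ * A)) := by
    rw [Matrix.mul_sub, Matrix.sub_mul, trace_sub, trace_sub]
    ring
  have hsqrt : Real.sqrt s ≤ 2 * s := by
    linarith [sqrt_natCast_le_self s, Nat.cast_nonneg (α := ℝ) s]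
  have hfirst : |trace (Shat * (Bᵀ * B - Aᵀ * A))|
      ≤ 2 * s * specNorm Shat * (specNorm A + specNorm B) * frobNorm (A - B) := by
    have hAB : 0 ≤ (specNorm A + specNorm B) * frobNorm (A - B) :=
      mul_nonneg (add_nonneg (specNorm_nonneg A) (specNorm_nonneg B)) (frobNorm_nonneg _)
    calc _ ≤ Real.sqrt s * specNorm Shat * ((specNorm A + specNorm B) * frobNorm (A - B)) :=
          abs_trace_mul_sub_le Shat A B
      _ ≤ 2 * s * specNorm Shat * ((specNorm A + specNorm B) * frobNorm (A - B)) := by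
          gcongr
          exact specNorm_nonneg Shat
      _ = _ := by ring
  rw [hgram, hgram, hsplit]
  exact (abs_add_le _ _).trans
    (add_le_add hfirst (abs_trace_mul_transpose_mul_self_le (Shat - Sg) A))

/-- Deterministic error bound for the plug-in estimator of `tr(Σ βᵀ Qᵀ Q β)`:
`|tr(Σ̂ β̂ᵀQᵀQβ̂) − tr(Σ βᵀQᵀQβ)| ≤ 2s ‖Σ̂‖₂ (‖Qβ‖₂ + ‖Qβ̂‖₂) ‖Qβ − Qβ̂‖_F
+ √s ‖Σ̂ − Σ‖₂ tr(βᵀQᵀQβ)`. -/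
theorem plugin_trace_estimator_bound
    (s k₀ q : ℕ)
    (Shat Sg : Matrix (Fin s) (Fin s) ℝ) (hShat : Shat.IsSymm) (hSg : Sg.IsSymm)
    (β βhat : Matrix (Fin k₀) (Fin s) ℝ) (Q : Matrix (Fin q) (Fin k₀) ℝ) :
    |Matrix.trace (Shat * (βhatᵀ * Qᵀ * Q * βhat)) - Matrix.trace (Sg * (βᵀ * Qᵀ * Q * β))|
      ≤ 2 * s * specNorm Shat * (specNorm (Q * β) + specNorm (Q * βhat))
            * frobNorm (Q * β - Q * βhat)
        + Real.sqrt s * specNorm (Shat - Sg) * Matrix.trace (βᵀ * Qᵀ * Q * β) :=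
  plugin_trace_estimator_bound_general s k₀ q Shat Sg β βhat Q
end

section
/- Let (α_t)_{t∈ℕ} be a positive nonincreasing sequence with α_t → 0, and let c_epr, L > 0 be constants. Suppose m : (0,∞) → ℕ is nondecreasing and satisfies m(B) ≥ B / (c_epr + √(c_epr L / α_{m(B)})) for every budget B > 0. Then m(B) → ∞ as B → ∞. -/
open Filter

/-! A budget `B` forces `B ≤ m(B) · (c_epr + √(c_epr L / α_{m(B)}))`. On the finitely many
values `t ≤ N` the right-hand side `t ↦ t · (c_epr + √(c_epr L / α_t))` is bounded, so once `B`
exceeds that bound `m(B)` must be larger than `N`. -/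

theorem Filter.Tendsto.of_tendsto_nat_comp {ι β : Type*} [LinearOrder β] [NoMaxOrder β]
    {l : Filter ι} {u : ι → ℕ} (h : ℕ → β) (hu : Tendsto (h ∘ u) l atTop) :
    Tendsto u l atTop := by
  refine tendsto_atTop.2 fun N => ?_
  have : Nonempty β := ⟨h 0⟩
  obtain ⟨M, hM⟩ := ((Set.finite_Iic N).image h).bddAbove
  filter_upwards [hu.eventually_gt_atTop M] with x hx
  by_contra! hlt
  exact hx.not_ge (hM ⟨u x, hlt.le, rfl⟩)

theorem aetc_exploration_diverges_general
    (α : ℕ → ℝ)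
    (cepr L : ℝ) (hcepr : 0 < cepr)
    (m : ℝ → ℕ)
    (hbound : ∀ B : ℝ, 0 < B →
      B / (cepr + Real.sqrt (cepr * L / α (m B))) ≤ (m B : ℝ)) :
    Tendsto m atTop atTop := by
  set D : ℕ → ℝ := fun t => cepr + Real.sqrt (cepr * L / α t)
  have hD : ∀ t, 0 < D t := fun t => add_pos_of_pos_of_nonneg hcepr (Real.sqrt_nonneg _)
  refine Tendsto.of_tendsto_nat_comp (fun t => t * D t) (tendsto_atTop_mono' atTop ?_ tendsto_id)
  filter_upwards [eventually_gt_atTop 0] with B hB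
  exact (div_le_iff₀ (hD _)).1 (hbound B hB)

/-- If `α_t ↓ 0`, `c_epr, L > 0`, and a nondecreasing map `m : (0,∞) → ℕ` satisfies
`m(B) ≥ B / (c_epr + √(c_epr L / α_{m(B)}))` for every budget `B > 0`,
then `m(B) → ∞` as `B → ∞`. -/
theorem aetc_exploration_diverges
    (α : ℕ → ℝ) (hαpos : ∀ t, 0 < α t) (hαanti : Antitone α)
    (hα0 : Tendsto α atTop (nhds 0))
    (cepr L : ℝ) (hcepr : 0 < cepr) (hL : 0 < L)
    (m : ℝ → ℕ)
    (hmono : ∀ B₁ B₂ : ℝ, 0 < B₁ → B₁ ≤ B₂ → m B₁ ≤ m B₂)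
    (hbound : ∀ B : ℝ, 0 < B →
      B / (cepr + Real.sqrt (cepr * L / α (m B))) ≤ (m B : ℝ)) :
    Tendsto m atTop atTop :=
  aetc_exploration_diverges_general α cepr L hcepr m hbound
end
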